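/- arXiv:2210.11368 — 2 statements merged into one kernel-verified Lean document; each statement's English description precedes it below -/
import Mathlib

section
/- Explicit form of the Sinkhorn updates: let p, q ∈ S_n(1) have strictly positive entries, γ > 0, and f(u,v) := γ(1^T B(u,v) 1 − ⟨u,p⟩ − ⟨v,q⟩). Then for every fixed v ∈ ℝ^n, the function u' ↦ f(u',v) has the unique minimizer u' = u + ln p − ln(B(u,v)1) (componentwise, for any u ∈ ℝ^n), and for every fixed u ∈ ℝ^n, the function v' ↦ f(u,v') has the unique minimizer v' = v + ln q − ln(B(u,v)^T 1) (componentwise, for any v ∈ ℝ^n). -/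
open Finset

/-- `B(u,v)ᵢⱼ = exp(uᵢ + vⱼ − Cᵢⱼ/γ)`. -/
noncomputable def Bmat (n : ℕ) (C : Matrix (Fin n) (Fin n) ℝ) (γ : ℝ)
    (u v : Fin n → ℝ) : Matrix (Fin n) (Fin n) ℝ :=
  Matrix.of fun i j => Real.exp (u i + v j - C i j / γ)

/-- The dual objective `f(u,v) = γ(1ᵀB(u,v)1 − ⟨u,p⟩ − ⟨v,q⟩)`. -/
noncomputable def dualF (n : ℕ) (C : Matrix (Fin n) (Fin n) ℝ) (γ : ℝ)
    (p q : Fin n → ℝ) (u v : Fin n → ℝ) : ℝ :=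
  γ * ((∑ i, ∑ j, Bmat n C γ u v i j) - (∑ i, u i * p i) - (∑ i, v i * q i))

open scoped Matrix

/-! For `u`, the objective splits into the one-variable functions `t ↦ eᵗ aᵢ − t pᵢ`, where
`aᵢ` is the `i`-th row sum of `B(0,v)`. By `1 + s < eˢ` for `s ≠ 0`, each of them has the
strict global minimizer `t = ln(pᵢ/aᵢ)`, which is the Sinkhorn update. The update in `v` is
the update in `u` for `Cᵀ` with the roles of `p` and `q` exchanged. -/

theorem forall_le_and_eq_of_forall_ne_lt {α β : Type*} [Preorder β] {f : α → β} {x : α}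
    (h : ∀ y, y ≠ x → f x < f y) :
    (∀ y, f x ≤ f y) ∧ ∀ y, (∀ z, f y ≤ f z) → y = x := by
  refine ⟨fun y => ?_, fun y hy => ?_⟩
  · rcases eq_or_ne y x with rfl | hne
    · exact le_rfl
    · exact (h y hne).le
  · by_contra hne
    exact lt_irrefl _ ((hy x).trans_lt (h y hne))

theorem Fintype.sum_lt_sum_of_forall_ne_lt {ι M : Type*} [Fintype ι] [AddCommMonoid M]
    [PartialOrder M] [IsOrderedCancelAddMonoid M] {φ : ι → M → M} {x y : ι → M}
    (h : ∀ i t, t ≠ x i → φ i (x i) < φ i t) (hne : y ≠ x) :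
    ∑ i, φ i (x i) < ∑ i, φ i (y i) := by
  obtain ⟨i, hi⟩ := Function.ne_iff.mp hne
  refine Finset.sum_lt_sum (fun j _ => ?_) ⟨i, mem_univ i, h i _ hi⟩
  rcases eq_or_ne (y j) (x j) with hj | hj
  · rw [hj]
  · exact (h j _ hj).le

theorem Real.exp_mul_sub_mul_lt_of_ne_log_div {a p t : ℝ} (ha : 0 < a) (hp : 0 < p)
    (ht : t ≠ Real.log (p / a)) :
    Real.exp (Real.log (p / a)) * a - Real.log (p / a) * p < Real.exp t * a - t * p := by
  set s := Real.log (p / a)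
  have hs : Real.exp s * a = p := by
    rw [Real.exp_log (div_pos hp ha), div_mul_cancel₀ p ha.ne']
  have hts : Real.exp t * a = Real.exp (t - s) * p := by
    rw [← hs, ← mul_assoc, ← Real.exp_add, sub_add_cancel]
  have hlt : (t - s + 1) * p < Real.exp (t - s) * p :=
    mul_lt_mul_of_pos_right (Real.add_one_lt_exp (sub_ne_zero.mpr ht)) hp
  rw [hs, hts]
  linarith

section Sinkhorn

variable {n : ℕ} {C : Matrix (Fin n) (Fin n) ℝ} {γ : ℝ}

theorem Bmat_row_sum (u v : Fin n → ℝ) (i : Fin n) :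
    ∑ j, Bmat n C γ u v i j = Real.exp (u i) * ∑ j, Bmat n C γ 0 v i j := by
  simp only [Bmat, Matrix.of_apply, Pi.zero_apply, zero_add, mul_sum, ← Real.exp_add]
  congr! 2
  ring

theorem Bmat_row_sum_pos (u v : Fin n → ℝ) (i : Fin n) : 0 < ∑ j, Bmat n C γ u v i j :=
  sum_pos (fun _ _ => Real.exp_pos _) ⟨i, mem_univ i⟩

theorem Bmat_transpose (u v : Fin n → ℝ) : (Bmat n C γ u v)ᵀ = Bmat n Cᵀ γ v u := by
  ext i j
  simp only [Bmat, Matrix.transpose_apply, Matrix.of_apply, add_comm (u j)]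

theorem dualF_transpose (p q u v : Fin n → ℝ) :
    dualF n Cᵀ γ q p v u = dualF n C γ p q u v := by
  simp only [dualF, ← Bmat_transpose, Matrix.transpose_apply]
  rw [sum_comm]
  ring

theorem dualF_eq_sum_row (p q u v : Fin n → ℝ) :
    dualF n C γ p q u v = γ * (∑ i, (Real.exp (u i) * ∑ j, Bmat n C γ 0 v i j - u i * p i)
      - ∑ i, v i * q i) := by
  simp only [dualF, Bmat_row_sum u, sum_sub_distrib]

theorem sinkhorn_update_eq_log_div {p : Fin n → ℝ} (hp : ∀ i, 0 < p i) (u v : Fin n → ℝ)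
    (i : Fin n) :
    u i + Real.log (p i) - Real.log (∑ j, Bmat n C γ u v i j)
      = Real.log (p i / ∑ j, Bmat n C γ 0 v i j) := by
  rw [Bmat_row_sum, Real.log_mul (Real.exp_ne_zero _) (Bmat_row_sum_pos 0 v i).ne',
    Real.log_exp, Real.log_div (hp i).ne' (Bmat_row_sum_pos 0 v i).ne']
  ring

theorem dualF_sinkhorn_update_lt (hγ : 0 < γ) {p : Fin n → ℝ} (hp : ∀ i, 0 < p i)
    (q u v u' : Fin n → ℝ)
    (hne : u' ≠ fun i => u i + Real.log (p i) - Real.log (∑ j, Bmat n C γ u v i j)) :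
    dualF n C γ p q (fun i => u i + Real.log (p i) - Real.log (∑ j, Bmat n C γ u v i j)) v
      < dualF n C γ p q u' v := by
  simp only [sinkhorn_update_eq_log_div hp u v] at hne ⊢
  rw [dualF_eq_sum_row, dualF_eq_sum_row]
  refine mul_lt_mul_of_pos_left (sub_lt_sub_right ?_ _) hγ
  exact Fintype.sum_lt_sum_of_forall_ne_lt (φ := fun i t => Real.exp t * _ - t * p i)
    (fun i _ ht => Real.exp_mul_sub_mul_lt_of_ne_log_div (Bmat_row_sum_pos 0 v i) (hp i) ht) hne

end Sinkhorn

theorem sinkhorn_updates_explicit_general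
    (n : ℕ) (C : Matrix (Fin n) (Fin n) ℝ)
    (γ : ℝ) (hγ : 0 < γ)
    (p q : Fin n → ℝ)
    (hppos : ∀ i, 0 < p i)
    (hqpos : ∀ i, 0 < q i) :
    (∀ v u : Fin n → ℝ,
      (∀ u' : Fin n → ℝ,
        dualF n C γ p q
          (fun i => u i + Real.log (p i) - Real.log (∑ j, Bmat n C γ u v i j)) v
          ≤ dualF n C γ p q u' v) ∧
      (∀ u' : Fin n → ℝ, (∀ u'' : Fin n → ℝ, dualF n C γ p q u' v ≤ dualF n C γ p q u'' v) →
        u' = fun i => u i + Real.log (p i) - Real.log (∑ j, Bmat n C γ u v i j)))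
    ∧
    (∀ u v : Fin n → ℝ,
      (∀ v' : Fin n → ℝ,
        dualF n C γ p q u
          (fun j => v j + Real.log (q j) - Real.log (∑ i, Bmat n C γ u v i j))
          ≤ dualF n C γ p q u v') ∧
      (∀ v' : Fin n → ℝ, (∀ v'' : Fin n → ℝ, dualF n C γ p q u v' ≤ dualF n C γ p q u v'') →
        v' = fun j => v j + Real.log (q j) - Real.log (∑ i, Bmat n C γ u v i j))) := by
  refine ⟨fun v u => forall_le_and_eq_of_forall_ne_lt (f := (dualF n C γ p q · v))
    (dualF_sinkhorn_update_lt hγ hppos q u v), fun u v => ?_⟩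
  have hcol : ∀ j, ∑ i, Bmat n C γ u v i j = ∑ i, Bmat n Cᵀ γ v u j i := fun j => by
    simp only [← Bmat_transpose, Matrix.transpose_apply]
  simp only [hcol, ← dualF_transpose (C := C)]
  exact forall_le_and_eq_of_forall_ne_lt (f := (dualF n Cᵀ γ q p · u))
    (dualF_sinkhorn_update_lt hγ hqpos p v u)

/-- explicit form of the Sinkhorn updates: the block minimizations of the
dual objective have unique, explicit solutions. -/
theorem sinkhorn_updates_explicit
    (n : ℕ) (hn : 2 ≤ n) (C : Matrix (Fin n) (Fin n) ℝ)
    (hC : ∀ i j, 0 ≤ C i j) (γ : ℝ) (hγ : 0 < γ)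
    (p q : Fin n → ℝ)
    (hp : (∀ i, 0 ≤ p i) ∧ ∑ i, p i = 1) (hppos : ∀ i, 0 < p i)
    (hq : (∀ i, 0 ≤ q i) ∧ ∑ i, q i = 1) (hqpos : ∀ i, 0 < q i) :
    (∀ v u : Fin n → ℝ,
      (∀ u' : Fin n → ℝ,
        dualF n C γ p q
          (fun i => u i + Real.log (p i) - Real.log (∑ j, Bmat n C γ u v i j)) v
          ≤ dualF n C γ p q u' v) ∧
      (∀ u' : Fin n → ℝ, (∀ u'' : Fin n → ℝ, dualF n C γ p q u' v ≤ dualF n C γ p q u'' v) →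
        u' = fun i => u i + Real.log (p i) - Real.log (∑ j, Bmat n C γ u v i j)))
    ∧
    (∀ u v : Fin n → ℝ,
      (∀ v' : Fin n → ℝ,
        dualF n C γ p q u
          (fun j => v j + Real.log (q j) - Real.log (∑ i, Bmat n C γ u v i j))
          ≤ dualF n C γ p q u v') ∧
      (∀ v' : Fin n → ℝ, (∀ v'' : Fin n → ℝ, dualF n C γ p q u v' ≤ dualF n C γ p q u v'') →
        v' = fun j => v j + Real.log (q j) - Real.log (∑ i, Bmat n C γ u v i j))) :=
  sinkhorn_updates_explicit_general n C γ hγ p q hppos hqpos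
end

section
/- Closed form of the Fenchel–Legendre transform of the entropy-regularized OT value: assume C is symmetric, let γ > 0 and let p ∈ S_n(1) have strictly positive entries. Define W*_{γ,p}(u) := max_{q ∈ S_n(1)} {⟨u, q⟩ − W_γ(q, p)}. Then for every u ∈ ℝ^n, W*_{γ,p}(u) = γ Σ_{j=1}^n p_j ln( Σ_{i=1}^n exp((u_i − C_{ji})/γ) ) − γ Σ_{j=1}^n p_j ln p_j. -/
open Finset

/-- The entropy-regularized OT value `W_γ(q,p)`. -/
noncomputable def Wgamma (n : ℕ) (C : Matrix (Fin n) (Fin n) ℝ) (γ : ℝ)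
    (q p : Fin n → ℝ) : ℝ :=
  sInf ((fun π : Matrix (Fin n) (Fin n) ℝ =>
      (∑ i, ∑ j, C i j * π i j) + γ * ∑ i, ∑ j, π i j * Real.log (π i j)) ''
    {π | (∀ i j, 0 ≤ π i j) ∧ (∀ i, ∑ j, π i j = q i) ∧ (∀ j, ∑ i, π i j = p j)})

/-!
Once the row marginal `q` is left free, maximizing `⟨u, q⟩ - W_γ(q, p)` amounts to maximizing
`⟨u, π 1⟩ - ⟨C, π⟩ - γ H(π)` over all nonnegative `π` with column marginal `p`, and this
objective splits into one Gibbs variational problem per column: for `x ≥ 0` of mass `s`,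
`∑ᵢ (aᵢ xᵢ - xᵢ log xᵢ) ≤ s (log ∑ᵢ exp aᵢ - log s)`, which is `log y ≤ y - 1` summed over `i`,
with equality at the Gibbs weights `xᵢ = s exp aᵢ / ∑ₖ exp aₖ`. Taking `aᵢ = (uᵢ - C i j) / γ`
in column `j` gives the closed form, the symmetry of `C` turning `C i j` into the `C j i` of the
formula.
-/

section Gibbs

open Real

variable {ι : Type*} [Fintype ι]

lemma mul_log_sub_mul_log_le {x w : ℝ} (hx : 0 ≤ x) (hw : 0 < w) :
    x * log w - x * log x ≤ w - x := by
  rcases hx.eq_or_lt with rfl | hx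
  · simpa using hw.le
  · have h := log_le_sub_one_of_pos (div_pos hw hx)
    rw [log_div hw.ne' hx.ne'] at h
    calc x * log w - x * log x = x * (log w - log x) := by ring
      _ ≤ x * (w / x - 1) := by gcongr
      _ = w - x := by field_simp

noncomputable def gibbs (a : ι → ℝ) (s : ℝ) (i : ι) : ℝ :=
  s * exp (a i) / ∑ k, exp (a k)

lemma gibbs_nonneg (a : ι → ℝ) {s : ℝ} (hs : 0 ≤ s) (i : ι) : 0 ≤ gibbs a s i := by
  unfold gibbs; positivity

variable (a : ι → ℝ) (s : ℝ)

lemma sum_exp_pos [Nonempty ι] : 0 < ∑ k, exp (a k) :=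
  sum_pos (fun _ _ => exp_pos _) univ_nonempty

lemma gibbs_pos [Nonempty ι] {s : ℝ} (hs : 0 < s) (i : ι) : 0 < gibbs a s i :=
  div_pos (mul_pos hs (exp_pos _)) (sum_exp_pos a)

lemma sum_gibbs [Nonempty ι] : ∑ i, gibbs a s i = s := by
  simp only [gibbs]
  rw [← sum_div, ← mul_sum, mul_div_assoc, div_self (sum_exp_pos a).ne', mul_one]

lemma log_gibbs [Nonempty ι] {s : ℝ} (hs : s ≠ 0) (i : ι) :
    log (gibbs a s i) = log s + a i - log (∑ k, exp (a k)) := by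
  rw [gibbs, log_div (by simp [hs]) (sum_exp_pos a).ne', log_mul hs (exp_pos _).ne', log_exp]

theorem sum_mul_sub_mul_log_le (x : ι → ℝ) (hx : ∀ i, 0 ≤ x i) :
    ∑ i, (a i * x i - x i * log (x i)) ≤
      (∑ i, x i) * (log (∑ i, exp (a i)) - log (∑ i, x i)) := by
  set s := ∑ i, x i
  rcases (sum_nonneg fun i _ => hx i : 0 ≤ s).eq_or_lt with hs | hs
  · have hx0 : ∀ i, x i = 0 := fun i =>
      (sum_eq_zero_iff_of_nonneg fun i _ => hx i).1 hs.symm i (mem_univ i)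
    simp [hx0, show s = 0 from hs.symm]
  · obtain ⟨i₀, -, -⟩ := exists_ne_zero_of_sum_ne_zero hs.ne'
    have : Nonempty ι := ⟨i₀⟩
    have hterm : ∀ i, a i * x i - x i * log (x i) ≤
        x i * (log (∑ k, exp (a k)) - log s) + (gibbs a s i - x i) := fun i => by
      have h := mul_log_sub_mul_log_le (hx i) (gibbs_pos a hs i)
      rw [log_gibbs a hs.ne'] at h
      linarith
    calc ∑ i, (a i * x i - x i * log (x i))
        ≤ ∑ i, (x i * (log (∑ k, exp (a k)) - log s) + (gibbs a s i - x i)) :=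
          sum_le_sum fun i _ => hterm i
      _ = s * (log (∑ k, exp (a k)) - log s) := by
        rw [sum_add_distrib, sum_sub_distrib, sum_gibbs, ← sum_mul, sub_self, add_zero]

theorem sum_mul_sub_mul_log_gibbs [Nonempty ι] :
    ∑ i, (a i * gibbs a s i - gibbs a s i * log (gibbs a s i)) =
      s * (log (∑ i, exp (a i)) - log s) := by
  rcases eq_or_ne s 0 with rfl | hs
  · simp [gibbs]
  · calc ∑ i, (a i * gibbs a s i - gibbs a s i * log (gibbs a s i))
        = (∑ i, gibbs a s i) * (log (∑ i, exp (a i)) - log s) := by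
          rw [sum_mul]; exact sum_congr rfl fun i _ => by rw [log_gibbs a hs]; ring
      _ = s * (log (∑ i, exp (a i)) - log s) := by rw [sum_gibbs]

end Gibbs

open Real (log exp)

section Couplings

variable {ι : Type*} [Fintype ι]

/-- `U(q, p)`. -/
def couplings (q p : ι → ℝ) : Set (Matrix ι ι ℝ) :=
  {π | (∀ i j, 0 ≤ π i j) ∧ (∀ i, ∑ j, π i j = q i) ∧ (∀ j, ∑ i, π i j = p j)}

/-- `⟨C, π⟩ + γ H(π)`. -/
noncomputable def entropicCost (C : Matrix ι ι ℝ) (γ : ℝ) (π : Matrix ι ι ℝ) : ℝ :=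
  (∑ i, ∑ j, C i j * π i j) + γ * ∑ i, ∑ j, π i j * log (π i j)

lemma Wgamma_eq_sInf (n : ℕ) (C : Matrix (Fin n) (Fin n) ℝ) (γ : ℝ) (q p : Fin n → ℝ) :
    Wgamma n C γ q p = sInf (entropicCost C γ '' couplings q p) := rfl

lemma nonempty_of_mem_stdSimplex {p : ι → ℝ} (hp : p ∈ stdSimplex ℝ ι) : Nonempty ι :=
  (isEmpty_or_nonempty ι).resolve_left fun _ => by simpa using hp.2

lemma vecMulVec_mem_couplings {q p : ι → ℝ} (hq : q ∈ stdSimplex ℝ ι)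
    (hp : p ∈ stdSimplex ℝ ι) : Matrix.vecMulVec q p ∈ couplings q p :=
  ⟨fun i j => mul_nonneg (hq.1 i) (hp.1 j),
    fun i => by simp [Matrix.vecMulVec_apply, ← mul_sum, hp.2],
    fun j => by simp [Matrix.vecMulVec_apply, ← sum_mul, hq.2]⟩

lemma mem_stdSimplex_of_mem_couplings {q p : ι → ℝ} {π : Matrix ι ι ℝ}
    (hπ : π ∈ couplings q p) (hp : p ∈ stdSimplex ℝ ι) : q ∈ stdSimplex ℝ ι := by
  obtain ⟨hπ₀, hrow, hcol⟩ := hπ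
  refine ⟨fun i => hrow i ▸ sum_nonneg fun j _ => hπ₀ i j, ?_⟩
  calc ∑ i, q i = ∑ i, ∑ j, π i j := by simp only [hrow]
    _ = ∑ j, ∑ i, π i j := sum_comm
    _ = 1 := by simpa only [hcol] using hp.2

noncomputable def entropicConjugate (C : Matrix ι ι ℝ) (γ : ℝ) (p u : ι → ℝ) : ℝ :=
  γ * ∑ j, p j * (log (∑ i, exp ((u i - C i j) / γ)) - log (p j))

variable (C : Matrix ι ι ℝ) {γ : ℝ} (p u : ι → ℝ)

lemma inner_sum_sub_entropicCost (hγ : γ ≠ 0) (π : Matrix ι ι ℝ) :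
    (∑ i, u i * ∑ j, π i j) - entropicCost C γ π =
      γ * ∑ j, ∑ i, ((u i - C i j) / γ * π i j - π i j * log (π i j)) := by
  simp only [entropicCost, mul_sum]
  rw [sum_comm (f := fun i j => C i j * π i j), sum_comm (f := fun i j => γ * _),
    sum_comm (f := fun i j => u i * π i j), ← sum_add_distrib, ← sum_sub_distrib]
  refine sum_congr rfl fun j _ => ?_
  rw [← sum_add_distrib, ← sum_sub_distrib]
  refine sum_congr rfl fun i _ => ?_
  field_simp
  ring

lemma inner_sum_sub_entropicCost_le (hγ : 0 < γ) {π : Matrix ι ι ℝ}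
    (hπ : ∀ i j, 0 ≤ π i j) (hcol : ∀ j, ∑ i, π i j = p j) :
    (∑ i, u i * ∑ j, π i j) - entropicCost C γ π ≤ entropicConjugate C γ p u := by
  rw [inner_sum_sub_entropicCost C u hγ.ne', entropicConjugate]
  gcongr with j
  simpa only [hcol j] using
    sum_mul_sub_mul_log_le (fun i => (u i - C i j) / γ) (fun i => π i j) (hπ · j)

lemma inner_sub_entropicConjugate_mem_lowerBounds (hγ : 0 < γ) (q : ι → ℝ) :
    (∑ i, u i * q i) - entropicConjugate C γ p u ∈
      lowerBounds (entropicCost C γ '' couplings q p) := by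
  rintro _ ⟨π, ⟨hπ, hrow, hcol⟩, rfl⟩
  have h := inner_sum_sub_entropicCost_le C p u hγ hπ hcol
  simp only [hrow] at h
  linarith

noncomputable def gibbsCoupling (C : Matrix ι ι ℝ) (γ : ℝ) (p u : ι → ℝ) :
    Matrix ι ι ℝ :=
  fun i j => gibbs (fun k => (u k - C k j) / γ) (p j) i

variable [Nonempty ι] (γ)

lemma gibbsCoupling_mem_couplings (hp : ∀ j, 0 ≤ p j) :
    gibbsCoupling C γ p u ∈ couplings (fun i => ∑ j, gibbsCoupling C γ p u i j) p :=
  ⟨fun i j => gibbs_nonneg _ (hp j) i, fun _ => rfl, fun _ => sum_gibbs _ _⟩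

lemma isLeast_entropicCost_gibbsCoupling (hγ : 0 < γ) (hp : ∀ j, 0 ≤ p j) :
    IsLeast (entropicCost C γ '' couplings (fun i => ∑ j, gibbsCoupling C γ p u i j) p)
      ((∑ i, u i * ∑ j, gibbsCoupling C γ p u i j) - entropicConjugate C γ p u) := by
  refine ⟨⟨_, gibbsCoupling_mem_couplings C γ p u hp, ?_⟩,
    inner_sub_entropicConjugate_mem_lowerBounds C p u hγ _⟩
  have h := inner_sum_sub_entropicCost C u hγ.ne' (gibbsCoupling C γ p u)
  have hcol : ∀ j, ∑ i, ((u i - C i j) / γ * gibbsCoupling C γ p u i j -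
      gibbsCoupling C γ p u i j * log (gibbsCoupling C γ p u i j)) =
        p j * (log (∑ i, exp ((u i - C i j) / γ)) - log (p j)) := fun j =>
    sum_mul_sub_mul_log_gibbs _ _
  rw [sum_congr rfl fun j _ => hcol j, ← entropicConjugate] at h
  linarith

end Couplings

theorem fenchel_transform_closed_form_general
    (n : ℕ) (C : Matrix (Fin n) (Fin n) ℝ)
    (hCsym : ∀ i j, C i j = C j i)
    (γ : ℝ) (hγ : 0 < γ)
    (p : Fin n → ℝ)
    (hp : (∀ i, 0 ≤ p i) ∧ ∑ i, p i = 1) :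
    ∀ u : Fin n → ℝ,
      IsGreatest
        ((fun q : Fin n → ℝ => (∑ i, u i * q i) - Wgamma n C γ q p) ''
          {q | (∀ i, 0 ≤ q i) ∧ ∑ i, q i = 1})
        (γ * (∑ j, p j * Real.log (∑ i, Real.exp ((u i - C j i) / γ)))
          - γ * ∑ j, p j * Real.log (p j)) := by
  intro u
  have : Nonempty (Fin n) := nonempty_of_mem_stdSimplex hp
  have hvalue : γ * (∑ j, p j * log (∑ i, exp ((u i - C j i) / γ)))
      - γ * ∑ j, p j * log (p j) = entropicConjugate C γ p u := by
    simp only [entropicConjugate, hCsym, mul_sub, sum_sub_distrib]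
  rw [hvalue]
  have hπ₀ := gibbsCoupling_mem_couplings C γ p u hp.1
  refine ⟨⟨_, mem_stdSimplex_of_mem_couplings hπ₀ hp, ?_⟩, ?_⟩
  · dsimp only
    rw [Wgamma_eq_sInf, (isLeast_entropicCost_gibbsCoupling C γ p u hγ hp.1).csInf_eq]
    ring
  · rintro _ ⟨q, hq, rfl⟩
    have h : (∑ i, u i * q i) - entropicConjugate C γ p u ≤ Wgamma n C γ q p :=
      le_csInf ⟨_, _, vecMulVec_mem_couplings hq hp, rfl⟩
        (inner_sub_entropicConjugate_mem_lowerBounds C p u hγ q)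
    linarith

/-- closed form of the Fenchel–Legendre transform of the
entropy-regularized OT value: the maximum defining `W*_{γ,p}(u)` is attained and equals
`γ Σ_j p_j ln(Σ_i exp((u_i − C_{ji})/γ)) − γ Σ_j p_j ln p_j`. -/
theorem fenchel_transform_closed_form
    (n : ℕ) (hn : 2 ≤ n) (C : Matrix (Fin n) (Fin n) ℝ)
    (hC : ∀ i j, 0 ≤ C i j) (hCsym : ∀ i j, C i j = C j i)
    (γ : ℝ) (hγ : 0 < γ)
    (p : Fin n → ℝ)
    (hp : (∀ i, 0 ≤ p i) ∧ ∑ i, p i = 1) (hppos : ∀ i, 0 < p i) :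
    ∀ u : Fin n → ℝ,
      IsGreatest
        ((fun q : Fin n → ℝ => (∑ i, u i * q i) - Wgamma n C γ q p) ''
          {q | (∀ i, 0 ≤ q i) ∧ ∑ i, q i = 1})
        (γ * (∑ j, p j * Real.log (∑ i, Real.exp ((u i - C j i) / γ)))
          - γ * ∑ j, p j * Real.log (p j)) :=
  fenchel_transform_closed_form_general n C hCsym γ hγ p hp
end
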